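/- arXiv:1912.09427 — 5 statements merged into one kernel-verified Lean document; each statement's English description precedes it below -/
import Mathlib

section
/- Let p = 3. A partition μ of n is 3-strict and 3-restricted (i.e. μ ∈ RP_3(n)) if and only if μ = β_{ν_1} + β_{ν_2} + ... + β_{ν_h} (componentwise sum of partitions) for some partition (ν_1, ..., ν_h) of n satisfying ν_r − ν_{r+1} ≥ 3 + δ_{3 | ν_r} for all 1 ≤ r < h. -/
/-- A partition: weakly decreasing list of positive integers. -/
def IsPartition (l : List ℕ) : Prop :=
  l.Pairwise (· ≥ ·) ∧ ∀ x ∈ l, 0 < x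

/-- A strict partition: strictly decreasing list of positive integers. -/
def StrictPartition (l : List ℕ) : Prop :=
  l.Pairwise (· > ·) ∧ ∀ x ∈ l, 0 < x

/-- `p`-strict: equal consecutive parts are divisible by `p`
(parts indexed with trailing zeros appended). -/
def PStrict (p : ℕ) (l : List ℕ) : Prop :=
  ∀ r, l.getD r 0 = l.getD (r+1) 0 → p ∣ l.getD r 0

/-- `p`-restricted: consecutive differences are at most `p - δ_{p ∣ part}`. -/
def PRestricted (p : ℕ) (l : List ℕ) : Prop :=
  ∀ r, l.getD r 0 - l.getD (r+1) 0 ≤ p - (if p ∣ l.getD r 0 then 1 else 0)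

/-- `RP p n l`: `l` is a `p`-strict `p`-restricted partition of `n`. -/
def RP (p n : ℕ) (l : List ℕ) : Prop :=
  IsPartition l ∧ l.sum = n ∧ PStrict p l ∧ PRestricted p l

/-- The basic spin partition `β_n`. -/
def beta (p n : ℕ) : List ℕ :=
  if n = 0 then []
  else if n % p = 0 then List.replicate (n / p - 1) p ++ [p - 1, 1]
  else List.replicate (n / p) p ++ [n % p]

/-- Number of parts not divisible by `p`. -/
def hp' (p : ℕ) (l : List ℕ) : ℕ :=
  (l.filter (fun x => decide (¬ p ∣ x))).length

/-- Componentwise sum of two partitions (padding with zeros). -/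
def addP (a b : List ℕ) : List ℕ :=
  List.ofFn (fun i : Fin (max a.length b.length) => a.getD i 0 + b.getD i 0)

/-- `β_{l_1} + β_{l_2} + ⋯ + β_{l_h}` (componentwise sum). -/
def sumBeta (p : ℕ) (l : List ℕ) : List ℕ :=
  (l.map (beta p)).foldr addP []

/-- `Dominates a b` means `b ⊴ a`: each partial sum of `b` is at most that of `a`. -/
def Dominates (a b : List ℕ) : Prop :=
  ∀ r, (b.take r).sum ≤ (a.take r).sum

/-- Gap condition: `l_r - l_{r+1} ≥ p + δ_{p ∣ l_r}` for all consecutive parts. -/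
def Gap (p : ℕ) (l : List ℕ) : Prop :=
  ∀ r, r + 1 < l.length →
    l.getD (r+1) 0 + p + (if p ∣ l.getD r 0 then 1 else 0) ≤ l.getD r 0

/-- The residue of a node in column `s ≥ 1`: `min (c-1) (p-c)` where
`1 ≤ c ≤ p` and `s ≡ c (mod p)`. -/
def res (p s : ℕ) : ℕ :=
  min ((s - 1) % p) (p - 1 - (s - 1) % p)

/-- The content of a partition: the multiset of residues of all its nodes. -/
def content (p : ℕ) (l : List ℕ) : Multiset ℕ :=
  (l.map (fun part => ((List.range part).map (fun i => res p (i+1)) : Multiset ℕ))).sum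

/-- The partitions `μ_k` of Table I, where `n = b * p + c` with `0 ≤ c < p`. -/
def tableMu (p b c k : ℕ) : List ℕ :=
  if c = 0 then
    if k = 1 then List.replicate (b-2) p ++ [p-1, p-2, 2, 1]
    else List.replicate (b-1) p ++ [p-k, k]
  else if c = 1 then
    if k = 1 then List.replicate (b-1) p ++ [p-2, 2, 1]
    else List.replicate (b-1) p ++ [p+1-k, k]
  else if c ≤ p - 2 then
    if k ≤ (c+1)/2 - 1 then List.replicate b p ++ [c/2 + k, (c+1)/2 - k]
    else if k = (c+1)/2 then List.replicate (b-1) p ++ [p-1, c, 1]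
    else List.replicate (b-1) p ++ [p + (c+1)/2 - k, c/2 + k]
  else
    if k ≤ (p-1)/2 - 1 then List.replicate b p ++ [(p-1)/2 + k, (p-1)/2 - k]
    else List.replicate (b-1) p ++ [p-1, p-2, 2]

/- ### getD toolkit -/

lemma getD_ofFn {n : ℕ} (f : Fin n → ℕ) (i : ℕ) :
    (List.ofFn f).getD i 0 = if h : i < n then f ⟨i, h⟩ else 0 := by
  rw [List.getD_eq_getElem?_getD, List.getElem?_ofFn]
  split <;> simp

lemma addP_length (a b : List ℕ) : (addP a b).length = max a.length b.length := by
  simp [addP]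

lemma addP_getD (a b : List ℕ) (i : ℕ) :
    (addP a b).getD i 0 = a.getD i 0 + b.getD i 0 := by
  rw [addP, getD_ofFn]
  split
  · rfl
  · rename_i h
    rw [List.getD_eq_default, List.getD_eq_default] <;> omega

lemma sum_getD (l : List ℕ) : ∀ n, l.length ≤ n → ∑ i ∈ Finset.range n, l.getD i 0 = l.sum := by
  induction l with
  | nil => intro n _; simp
  | cons a t ih =>
    intro n hn
    have hn1 : n = (n-1) + 1 := by simp at hn; omega
    rw [hn1, Finset.sum_range_succ']
    simp only [List.getD_cons_succ, List.getD_cons_zero]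
    rw [ih (n-1) (by simp at hn ⊢; omega), List.sum_cons, Nat.add_comm]

lemma addP_sum (a b : List ℕ) : (addP a b).sum = a.sum + b.sum := by
  rw [← sum_getD (addP a b) (max a.length b.length) (by simp [addP_length])]
  simp only [addP_getD]
  rw [Finset.sum_add_distrib, sum_getD a _ (by omega), sum_getD b _ (by omega)]

lemma sorted_getD_le {l : List ℕ} (h : l.Pairwise (· ≥ ·)) (i : ℕ) :
    l.getD (i+1) 0 ≤ l.getD i 0 := by
  by_cases hi : i + 1 < l.length
  · rw [List.getD_eq_getElem l 0 hi, List.getD_eq_getElem l 0 (by omega)]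
    exact List.pairwise_iff_getElem.mp h i (i+1) (by omega) hi (by omega)
  · rw [List.getD_eq_default _ _ (by omega)]; omega

lemma sorted_of_getD {l : List ℕ} (h : ∀ i, l.getD (i+1) 0 ≤ l.getD i 0) :
    l.Pairwise (· ≥ ·) := by
  rw [← List.isChain_iff_pairwise, List.isChain_iff_getElem]
  intro i hi
  have := h i
  rwa [List.getD_eq_getElem l 0 (by omega), List.getD_eq_getElem l 0 (by omega)] at this

lemma getD_pos {l : List ℕ} (h : ∀ x ∈ l, 0 < x) {i : ℕ} (hi : i < l.length) :
    0 < l.getD i 0 := by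
  rw [List.getD_eq_getElem l 0 hi]
  exact h _ (List.getElem_mem hi)

lemma pos_of_getD {l : List ℕ} (h : ∀ i < l.length, 0 < l.getD i 0) : ∀ x ∈ l, 0 < x := by
  intro x hx
  obtain ⟨i, hi, rfl⟩ := List.getElem_of_mem hx
  have := h i hi
  rwa [List.getD_eq_getElem l 0 hi] at this

lemma getD_mono {l : List ℕ} (h : ∀ i, l.getD (i+1) 0 ≤ l.getD i 0) :
    ∀ i j, i ≤ j → l.getD j 0 ≤ l.getD i 0 := by
  intro i j hij
  induction j, hij using Nat.le_induction with
  | base => exact le_refl _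
  | succ j hj ih => exact (h j).trans ih

lemma list_eq_of_getD {a b : List ℕ} (hl : a.length = b.length)
    (h : ∀ i, a.getD i 0 = b.getD i 0) : a = b := by
  refine List.ext_getElem hl (fun i h1 h2 => ?_)
  have := h i
  rwa [List.getD_eq_getElem _ _ h1, List.getD_eq_getElem _ _ h2] at this

lemma le_head {l : List ℕ} (h : l.Pairwise (· ≥ ·)) {b : ℕ} (hb : b ∈ l) : b ≤ l.headD 0 := by
  cases l with
  | nil => simp at hb
  | cons a t =>
    rcases List.mem_cons.mp hb with rfl | hbt
    · simp
    · exact List.rel_of_pairwise_cons h hbt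

/- ### beta toolkit -/

def bfun (m i : ℕ) : ℕ :=
  if m = 0 then 0
  else if m % 3 = 0 then
    (if i + 2 ≤ m / 3 then 3 else if i + 1 = m / 3 then 2 else if i = m / 3 then 1 else 0)
  else
    (if i + 1 ≤ m / 3 then 3 else if i = m / 3 then m % 3 else 0)

lemma getD_replicate_append (k x : ℕ) (t : List ℕ) (i : ℕ) :
    ((List.replicate k x) ++ t).getD i 0 = if i < k then x else t.getD (i - k) 0 := by
  induction k generalizing i with
  | zero => simp
  | succ k ih =>
    rw [List.replicate_succ, List.cons_append]
    cases i with
    | zero => simp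
    | succ i =>
      simp only [List.getD_cons_succ, ih]
      split <;> split <;> first | rfl | omega | (congr 1; omega)

lemma getD_pair (a b j : ℕ) :
    (([a, b] : List ℕ).getD j 0) = if j = 0 then a else if j = 1 then b else 0 := by
  match j with
  | 0 => rfl
  | 1 => rfl
  | (n+2) => simp [List.getD]

lemma getD_single (a j : ℕ) : (([a] : List ℕ).getD j 0) = if j = 0 then a else 0 := by
  match j with
  | 0 => rfl
  | (n+1) => simp [List.getD]

lemma beta_getD (m i : ℕ) : (beta 3 m).getD i 0 = bfun m i := by
  unfold beta bfun
  by_cases h0 : m = 0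
  · simp [h0]
  · simp only [h0, if_false]
    by_cases h3 : m % 3 = 0
    · simp only [h3, if_true, getD_replicate_append, getD_pair]
      split_ifs <;> omega
    · simp only [h3, if_false, getD_replicate_append, getD_single]
      split_ifs <;> omega

lemma beta_length (m : ℕ) (hm : 0 < m) : (beta 3 m).length = m / 3 + 1 := by
  unfold beta
  rw [if_neg (by omega)]
  split <;> simp <;> omega

lemma beta_sum (m : ℕ) : (beta 3 m).sum = m := by
  unfold beta
  by_cases h0 : m = 0
  · simp [h0]
  · rw [if_neg h0]
    split <;> simp [List.sum_replicate] <;> omega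

lemma bfun_anti (m i : ℕ) : bfun m (i+1) ≤ bfun m i := by
  unfold bfun; split_ifs <;> omega

lemma bfun_pos (m : ℕ) (hm : 0 < m) {i : ℕ} (h : i ≤ m/3) : 0 < bfun m i := by
  unfold bfun; split_ifs <;> omega

lemma bfun_eq_mod {m i : ℕ} (h : bfun m i = bfun m (i+1)) : bfun m i % 3 = 0 := by
  unfold bfun at h ⊢; split_ifs at h ⊢ <;> omega

lemma sumBeta_cons (m : ℕ) (t : List ℕ) :
    sumBeta 3 (m :: t) = addP (beta 3 m) (sumBeta 3 t) := rfl

lemma gap_tail {m : ℕ} {t : List ℕ} (h : Gap 3 (m :: t)) : Gap 3 t := by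
  intro r hr
  have := h (r+1) (by simp; omega)
  simpa using this

lemma isPartition_tail {m : ℕ} {t : List ℕ} (h : IsPartition (m :: t)) : IsPartition t :=
  ⟨h.1.of_cons, fun x hx => h.2 x (List.mem_cons_of_mem _ hx)⟩

/- ### backward direction -/

lemma back : ∀ ν : List ℕ, IsPartition ν → Gap 3 ν →
    RP 3 ν.sum (sumBeta 3 ν) ∧
    (sumBeta 3 ν).length = (ν.headD 0) / 3 + (if ν = [] then 0 else 1) ∧
    (∀ m₂ t, ν = m₂ :: t →
      (sumBeta 3 ν).getD (m₂/3) 0 = (if m₂ % 3 = 0 then 1 else m₂ % 3)) := by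
  intro ν
  induction ν with
  | nil =>
    intro _ _
    refine ⟨⟨⟨List.Pairwise.nil, by simp [sumBeta]⟩, rfl, ?_, ?_⟩, by simp [sumBeta], by simp⟩
    · intro r _; simp [sumBeta, List.getD_nil]
    · intro r; simp [sumBeta, List.getD_nil]
  | cons m ν' ih =>
    intro hpart hgap
    have hpos_m : 0 < m := hpart.2 m (List.mem_cons_self)
    obtain ⟨hRP', hlen', hlast'⟩ := ih (isPartition_tail hpart) (gap_tail hgap)
    obtain ⟨⟨hsort', hpos'⟩, hsum', hst', hre'⟩ := hRP'
    obtain ⟨S', hS'⟩ : ∃ S', sumBeta 3 ν' = S' := ⟨_, rfl⟩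
    rw [hS'] at hlen' hlast' hsort' hpos' hsum' hst' hre'
    have hz : ∀ i, S'.length ≤ i → S'.getD i 0 = 0 := fun i h => List.getD_eq_default _ _ h
    have hmono' : ∀ i, S'.getD (i+1) 0 ≤ S'.getD i 0 := sorted_getD_le hsort'
    have hub : S'.length + (if m % 3 = 0 then 1 else 0) ≤ m / 3 := by
      cases ν' with
      | nil =>
        have : S'.length = 0 := by rw [hlen']; simp
        rw [this]; split_ifs with h <;> omega
      | cons m₂ t =>
        have hg0 := hgap 0 (by simp)
        simp only [List.getD_cons_succ, List.getD_cons_zero] at hg0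
        have hL : S'.length = m₂ / 3 + 1 := by rw [hlen']; simp
        rw [hL]
        split_ifs with h1 <;> split_ifs at hg0 with h2 <;> omega
    have hv : ∀ i, i + 1 = S'.length →
        ∃ m₂, m₂ / 3 = i ∧ S'.getD i 0 = (if m₂ % 3 = 0 then 1 else m₂ % 3) ∧
          m₂ + 3 + (if 3 ∣ m then 1 else 0) ≤ m := by
      intro i hi
      cases ν' with
      | nil =>
        exfalso; rw [hlen'] at hi; simp at hi
      | cons m₂ t =>
        have hL : S'.length = m₂ / 3 + 1 := by rw [hlen']; simp
        have hi2 : m₂ / 3 = i := by omega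
        refine ⟨m₂, hi2, ?_, ?_⟩
        · have := hlast' m₂ t rfl
          rwa [hi2] at this
        · have := hgap 0 (by simp)
          simpa using this
    have hg : ∀ i, (sumBeta 3 (m :: ν')).getD i 0 = bfun m i + S'.getD i 0 := by
      intro i; rw [sumBeta_cons, addP_getD, beta_getD, hS']
    have hlen : (sumBeta 3 (m :: ν')).length = m / 3 + 1 := by
      rw [sumBeta_cons, addP_length, beta_length m hpos_m, hS']
      split_ifs at hub <;> omega
    have hmono : ∀ i, (sumBeta 3 (m::ν')).getD (i+1) 0 ≤ (sumBeta 3 (m::ν')).getD i 0 := by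
      intro i; rw [hg (i+1), hg i]; exact Nat.add_le_add (bfun_anti m i) (hmono' i)
    have hsum : (sumBeta 3 (m::ν')).sum = (m::ν').sum := by
      rw [sumBeta_cons, addP_sum, beta_sum, hS', hsum', List.sum_cons]
    have hstrict : PStrict 3 (sumBeta 3 (m::ν')) := by
      intro r hr
      rw [hg r, hg (r+1)] at hr
      rw [hg r]
      have h1 := bfun_anti m r
      have h2 := hmono' r
      have heq1 : bfun m r = bfun m (r+1) := by omega
      have heq2 : S'.getD r 0 = S'.getD (r+1) 0 := by omega
      have h3 := hst' r heq2
      have h4 := bfun_eq_mod heq1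
      omega
    have hrestr : PRestricted 3 (sumBeta 3 (m::ν')) := by
      intro r
      rw [hg r, hg (r+1)]
      by_cases h3m : m % 3 = 0
      · rcases Nat.lt_or_ge (r+3) (m/3+1) with hc | hc
        · have e1 : bfun m r = 3 := by unfold bfun; split_ifs <;> omega
          have e2 : bfun m (r+1) = 3 := by unfold bfun; split_ifs <;> omega
          have hIH := hre' r
          rw [e1, e2]
          split_ifs at hIH ⊢ <;> omega
        · rcases Nat.eq_or_lt_of_le hc with hc2 | hc2
          · -- r + 2 = m/3 : pattern (3,2)
            have e1 : bfun m r = 3 := by unfold bfun; split_ifs <;> omega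
            have e2 : bfun m (r+1) = 2 := by unfold bfun; split_ifs <;> omega
            have hz2 : S'.getD (r+1) 0 = 0 := hz _ (by split_ifs at hub <;> omega)
            rcases Nat.lt_or_ge r S'.length with hr1 | hr1
            · have hL : r + 1 = S'.length := by split_ifs at hub <;> omega
              obtain ⟨m₂, hm2i, hm2v, hm2g⟩ := hv r hL
              rw [e1, e2, hz2]
              split_ifs at hm2v ⊢ <;> omega
            · rw [e1, e2, hz _ hr1, hz2]
              split_ifs <;> omega
          · have hz1 : S'.getD r 0 = 0 := hz _ (by split_ifs at hub <;> omega)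
            have hz2 : S'.getD (r+1) 0 = 0 := hz _ (by split_ifs at hub <;> omega)
            rw [hz1, hz2]
            have e1 : bfun m r ≤ 2 := by unfold bfun; split_ifs <;> omega
            have e2 : bfun m r - bfun m (r+1) ≤ 1 := by unfold bfun; split_ifs <;> omega
            split_ifs <;> omega
      · rcases Nat.lt_or_ge (r+2) (m/3+1) with hc | hc
        · have e1 : bfun m r = 3 := by unfold bfun; split_ifs <;> omega
          have e2 : bfun m (r+1) = 3 := by unfold bfun; split_ifs <;> omega
          have hIH := hre' r
          rw [e1, e2]
          split_ifs at hIH ⊢ <;> omega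
        · rcases Nat.eq_or_lt_of_le hc with hc2 | hc2
          · -- r + 1 = m/3 : pattern (3, c)
            have e1 : bfun m r = 3 := by unfold bfun; split_ifs <;> omega
            have e2 : bfun m (r+1) = m % 3 := by unfold bfun; split_ifs <;> omega
            have hz2 : S'.getD (r+1) 0 = 0 := hz _ (by split_ifs at hub <;> omega)
            rcases Nat.lt_or_ge r S'.length with hr1 | hr1
            · have hL : r + 1 = S'.length := by split_ifs at hub <;> omega
              obtain ⟨m₂, hm2i, hm2v, hm2g⟩ := hv r hL
              rw [e1, e2, hz2]
              split_ifs at hm2v hm2g ⊢ <;> omega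
            · rw [e1, e2, hz _ hr1, hz2]
              split_ifs <;> omega
          · have hz1 : S'.getD r 0 = 0 := hz _ (by split_ifs at hub <;> omega)
            have hz2 : S'.getD (r+1) 0 = 0 := hz _ (by split_ifs at hub <;> omega)
            rw [hz1, hz2]
            have e2 : bfun m (r+1) = 0 := by unfold bfun; split_ifs <;> omega
            have e1 : bfun m r ≤ 2 := by unfold bfun; split_ifs <;> omega
            rw [e2]
            split_ifs <;> omega
    refine ⟨⟨⟨sorted_of_getD hmono, ?_⟩, hsum, hstrict, hrestr⟩, ?_, ?_⟩
    · refine pos_of_getD (fun i hi => ?_)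
      rw [hg]
      have : 0 < bfun m i := bfun_pos m hpos_m (by rw [hlen] at hi; omega)
      omega
    · rw [hlen]; simp
    · intro m₂ t heq
      injection heq with h1 h2
      subst h1; subst h2
      rw [hg, hz _ (by split_ifs at hub <;> omega)]
      have : bfun m (m/3) = if m % 3 = 0 then 1 else m % 3 := by
        unfold bfun; split_ifs <;> omega
      omega

/- ### trim toolkit -/

def trim (l : List ℕ) : List ℕ := l.takeWhile (fun x => x ≠ 0)

lemma trim_sublist (l : List ℕ) : List.Sublist (trim l) l := List.takeWhile_sublist _

lemma trim_length_le (l : List ℕ) : (trim l).length ≤ l.length :=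
  (trim_sublist l).length_le

lemma trim_sorted {l : List ℕ} (h : l.Pairwise (· ≥ ·)) : (trim l).Pairwise (· ≥ ·) :=
  h.sublist (trim_sublist l)

lemma trim_pos (l : List ℕ) : ∀ x ∈ trim l, 0 < x := by
  intro x hx
  have := List.mem_takeWhile_imp hx
  simp at this
  omega

lemma trim_getD {l : List ℕ} (h : l.Pairwise (· ≥ ·)) (i : ℕ) :
    (trim l).getD i 0 = l.getD i 0 := by
  induction l generalizing i with
  | nil => rfl
  | cons a t ihl =>
    by_cases ha : a = 0
    · subst ha
      have hall : ∀ x ∈ t, x = 0 := fun x hx =>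
        Nat.le_zero.mp (List.rel_of_pairwise_cons h hx)
      rw [show trim (0 :: t) = [] from by simp [trim]]
      cases i with
      | zero => simp
      | succ i =>
        rw [List.getD_nil, List.getD_cons_succ]
        by_cases hi : i < t.length
        · rw [List.getD_eq_getElem t 0 hi]
          exact (hall _ (List.getElem_mem hi)).symm
        · rw [List.getD_eq_default _ _ (by omega)]
    · rw [show trim (a :: t) = a :: trim t from by simp [trim, ha]]
      cases i with
      | zero => rfl
      | succ i =>
        rw [List.getD_cons_succ, List.getD_cons_succ]
        exact ihl h.of_cons i

/- ### forward direction -/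

def peel (μ : List ℕ) (j : ℕ) : List ℕ := trim ((μ.take j).map (fun x => x - 3))

lemma map_take_getD (l : List ℕ) (j i : ℕ) :
    ((l.take j).map (fun x => x - 3)).getD i 0 =
      if i < j ∧ i < l.length then l.getD i 0 - 3 else 0 := by
  rw [List.getD_eq_getElem?_getD, List.getElem?_map, List.getElem?_take]
  by_cases h1 : i < j
  · by_cases h2 : i < l.length
    · rw [if_pos h1, List.getElem?_eq_getElem h2, if_pos ⟨h1, h2⟩, List.getD_eq_getElem l 0 h2]
      rfl
    · rw [if_pos h1, List.getElem?_eq_none (by simpa using h2), if_neg (by omega)]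
      rfl
  · rw [if_neg h1, if_neg (by omega)]
    cases l[i]? <;> rfl

lemma getD_zero_headD (l : List ℕ) : l.getD 0 0 = l.headD 0 := by
  cases l <;> rfl

lemma rp_last {n : ℕ} {l : List ℕ} (h : RP 3 n l) (hl : 0 < l.length) :
    1 ≤ l.getD (l.length - 1) 0 ∧ l.getD (l.length - 1) 0 ≤ 2 := by
  have h1 : 0 < l.getD (l.length - 1) 0 := getD_pos h.1.2 (by omega)
  have h2 := h.2.2.2 (l.length - 1)
  rw [List.getD_eq_default _ _ (show l.length ≤ l.length - 1 + 1 by omega)] at h2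
  split_ifs at h2 <;> omega

lemma step (μ : List ℕ) (j : ℕ) (hRP : RP 3 μ.sum μ)
    (hjlt : j < μ.length)
    (hsmall : μ.getD j 0 ≤ 2)
    (h3 : ∀ i < j, 3 ≤ μ.getD i 0) :
    RP 3 (peel μ j).sum (peel μ j) ∧ (peel μ j).length ≤ j ∧
      (∀ i, (peel μ j).getD i 0 = if i < j then μ.getD i 0 - 3 else 0) ∧
      (peel μ j).sum + 3 * j = ∑ i ∈ Finset.range j, μ.getD i 0 := by
  obtain ⟨⟨hsort, hposl⟩, -, hst, hre⟩ := hRP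
  have hmono : ∀ i, μ.getD (i+1) 0 ≤ μ.getD i 0 := sorted_getD_le hsort
  have hgd_pre : ∀ i, ((μ.take j).map (fun x => x - 3)).getD i 0 =
      if i < j then μ.getD i 0 - 3 else 0 := by
    intro i
    rw [map_take_getD]
    split_ifs <;> omega
  have hsort_pre : ((μ.take j).map (fun x => x - 3)).Pairwise (· ≥ ·) := by
    refine sorted_of_getD (fun i => ?_)
    rw [hgd_pre, hgd_pre]
    have := hmono i
    split_ifs <;> omega
  have hgd : ∀ i, (peel μ j).getD i 0 = if i < j then μ.getD i 0 - 3 else 0 :=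
    fun i => (trim_getD hsort_pre i).trans (hgd_pre i)
  have hlen0 : (peel μ j).length ≤ j := by
    refine le_trans (trim_length_le _) (by simp)
  have hsum0 : (peel μ j).sum + 3 * j = ∑ i ∈ Finset.range j, μ.getD i 0 := by
    rw [← sum_getD (peel μ j) j hlen0]
    have heq : ∀ i ∈ Finset.range j, (peel μ j).getD i 0 + 3 = μ.getD i 0 := by
      intro i hi
      rw [hgd i, if_pos (Finset.mem_range.mp hi)]
      have := h3 i (Finset.mem_range.mp hi)
      omega
    calc (∑ i ∈ Finset.range j, (peel μ j).getD i 0) + 3 * j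
        = ∑ i ∈ Finset.range j, ((peel μ j).getD i 0 + 3) := by
          rw [Finset.sum_add_distrib, Finset.sum_const, Finset.card_range, smul_eq_mul,
            Nat.mul_comm]
      _ = ∑ i ∈ Finset.range j, μ.getD i 0 := Finset.sum_congr rfl heq
  have hstrict : PStrict 3 (peel μ j) := by
    intro r hr
    rw [hgd r, hgd (r+1)] at hr
    rw [hgd r]
    rcases Nat.lt_or_ge (r+1) j with h | h
    · rw [if_pos (by omega), if_pos h] at hr
      rw [if_pos (by omega)]
      have h1 := h3 r (by omega)
      have h2 := h3 (r+1) h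
      have heq : μ.getD r 0 = μ.getD (r+1) 0 := by omega
      have := hst r heq
      omega
    · rw [if_neg (show ¬ (r+1 < j) by omega)] at hr
      split_ifs at hr ⊢ <;> omega
  have hrestr : PRestricted 3 (peel μ j) := by
    intro r
    rw [hgd r, hgd (r+1)]
    rcases Nat.lt_or_ge (r+1) j with h | h
    · have h1 := h3 r (by omega)
      have h2 := h3 (r+1) h
      have hIH := hre r
      rw [if_pos (by omega), if_pos h]
      split_ifs at hIH ⊢ <;> omega
    · rcases Nat.eq_or_lt_of_le h with h2 | h2
      · have h1 := h3 r (by omega)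
        have hj := hre r
        have hsm : μ.getD (r+1) 0 ≤ 2 := by rw [h2] at hsmall; exact hsmall
        rw [if_pos (by omega), if_neg (by omega)]
        split_ifs at hj ⊢ <;> omega
      · rw [if_neg (by omega), if_neg (by omega)]
        split_ifs <;> omega
  exact ⟨⟨⟨trim_sorted hsort_pre, trim_pos _⟩, rfl, hstrict, hrestr⟩, hlen0, hgd, hsum0⟩

lemma forward : ∀ K : ℕ, ∀ μ : List ℕ, μ.length ≤ K → RP 3 μ.sum μ →
    ∃ ν : List ℕ, IsPartition ν ∧ ν.sum = μ.sum ∧ Gap 3 ν ∧ sumBeta 3 ν = μ ∧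
      ν.headD 0 ≤ 3 * (μ.length - 1) + μ.getD (μ.length - 1) 0 := by
  intro K
  induction K with
  | zero =>
    intro μ hlen _
    have : μ = [] := List.length_eq_zero_iff.mp (by omega)
    subst this
    exact ⟨[], ⟨List.Pairwise.nil, by simp⟩, rfl, by intro r hr; simp at hr, rfl, by simp⟩
  | succ K ih =>
    intro μ hlenK hRP
    by_cases hnil : μ = []
    · subst hnil
      exact ⟨[], ⟨List.Pairwise.nil, by simp⟩, rfl, by intro r hr; simp at hr, rfl, by simp⟩
    have hk : 0 < μ.length := List.length_pos_iff.mpr hnil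
    obtain ⟨⟨hsort, hposl⟩, -, hst, hre⟩ := hRP
    have hmono : ∀ i, μ.getD (i+1) 0 ≤ μ.getD i 0 := sorted_getD_le hsort
    have hmono' := getD_mono hmono
    obtain ⟨k, hkeq⟩ : ∃ k, μ.length = k := ⟨_, rfl⟩
    have hk1 : 1 ≤ k := by omega
    have hlast := rp_last ⟨⟨hsort, hposl⟩, rfl, hst, hre⟩ hk
    rw [hkeq] at hlast
    obtain ⟨t, hteq⟩ : ∃ t, μ.getD (k-1) 0 = t := ⟨_, rfl⟩
    rw [hteq] at hlast
    by_cases hA : 2 ≤ k ∧ t = 1 ∧ μ.getD (k-2) 0 = 2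
    · -- Case A : bottom is (…, 2, 1), peel β_{3(k-1)}
      obtain ⟨hk2, ht1, h22⟩ := hA
      have h3j : ∀ i < k-2, 3 ≤ μ.getD i 0 := by
        intro i hi
        have h32 : 3 ≤ μ.getD (k-3) 0 := by
          have hc1 : μ.getD (k-2) 0 ≤ μ.getD (k-3) 0 := by
            have := hmono (k-3)
            rwa [show k-3+1 = k-2 by omega] at this
          by_contra hcon
          have heqq : μ.getD (k-3) 0 = μ.getD (k-3+1) 0 := by
            rw [show k-3+1 = k-2 by omega]; omega
          have := hst (k-3) heqq
          rw [show k-3+1 = k-2 by omega] at heqq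
          omega
        exact le_trans h32 (hmono' i (k-3) (by omega))
      obtain ⟨hRP0, hlen0, hgd0, hsum0⟩ :=
        step μ (k-2) ⟨⟨hsort, hposl⟩, rfl, hst, hre⟩ (by omega) (by omega) h3j
      obtain ⟨ν', hp', hsum', hgap', heq', hhead'⟩ := ih (peel μ (k-2)) (by omega) hRP0
      have ht0 : (peel μ (k-2)).getD ((peel μ (k-2)).length - 1) 0 ≤ 2 := by
        rcases Nat.eq_zero_or_pos (peel μ (k-2)).length with h | h
        · rw [List.getD_eq_default _ _ (by omega)]; omega
        · exact (rp_last hRP0 h).2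
      have hkey : ν' ≠ [] → ν'.headD 0 + 4 ≤ 3*(k-1) := by
        intro hne
        obtain ⟨m₂, t₂, hcons⟩ := List.exists_cons_of_ne_nil hne
        have hm₂ : 0 < m₂ := hp'.2 m₂ (by rw [hcons]; exact List.mem_cons_self)
        have hk0 : 1 ≤ (peel μ (k-2)).length := by
          rw [← heq', hcons, sumBeta_cons, addP_length, beta_length m₂ hm₂]
          omega
        omega
      refine ⟨3*(k-1) :: ν', ⟨?_, ?_⟩, ?_, ?_, ?_, ?_⟩
      · rw [List.pairwise_cons]
        refine ⟨fun b hb => ?_, hp'.1⟩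
        have h1 := le_head hp'.1 hb
        have h2 := hkey (List.ne_nil_of_mem hb)
        omega
      · intro x hx
        rcases List.mem_cons.mp hx with rfl | hx
        · omega
        · exact hp'.2 x hx
      · -- sum
        obtain ⟨a, ha⟩ : ∃ a, k - 2 = a := ⟨_, rfl⟩
        have h1 : μ.sum = ∑ i ∈ Finset.range (a+1+1), μ.getD i 0 :=
          (sum_getD μ (a+1+1) (by omega)).symm
        rw [Finset.sum_range_succ, Finset.sum_range_succ,
          show a+1 = k-1 by omega, ← ha] at h1
        rw [List.sum_cons, hsum']
        omega
      · -- Gap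
        intro r hr
        cases r with
        | zero =>
          simp only [List.getD_cons_succ, List.getD_cons_zero]
          rw [getD_zero_headD, if_pos ⟨k-1, rfl⟩]
          have hne : ν' ≠ [] := by
            intro hcon
            rw [hcon] at hr
            simp at hr
          have := hkey hne
          omega
        | succ s =>
          simp only [List.getD_cons_succ]
          exact hgap' s (by simp at hr; omega)
      · -- sumBeta = μ
        rw [sumBeta_cons, heq']
        refine list_eq_of_getD ?_ ?_
        · rw [addP_length, beta_length _ (by omega)]
          have hdv : 3*(k-1)/3 = k-1 := by omega
          rw [hdv]
          omega
        · intro i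
          rw [addP_getD, beta_getD, hgd0 i]
          rcases Nat.lt_or_ge i (k-2) with hi | hi
          · rw [if_pos hi]
            have e1 : bfun (3*(k-1)) i = 3 := by unfold bfun; split_ifs <;> omega
            have := h3j i hi
            omega
          · rw [if_neg (by omega)]
            rcases Nat.eq_or_lt_of_le hi with he | he
            · have e1 : bfun (3*(k-1)) i = 2 := by unfold bfun; split_ifs <;> omega
              rw [← he] at e1 ⊢
              omega
            · rcases Nat.eq_or_lt_of_le (show k-1 ≤ i by omega) with he2 | he2
              · have e1 : bfun (3*(k-1)) i = 1 := by unfold bfun; split_ifs <;> omega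
                rw [← he2] at e1 ⊢
                omega
              · have e1 : bfun (3*(k-1)) i = 0 := by unfold bfun; split_ifs <;> omega
                rw [e1, List.getD_eq_default _ _ (by omega)]
      · simp only [List.headD_cons, hkeq, hteq]
        omega
    · -- Case B : peel β_{3(k-1)+t}
      have h3j : ∀ i < k-1, 3 ≤ μ.getD i 0 := by
        intro i hi
        have h32 : 3 ≤ μ.getD (k-2) 0 := by
          have hc1 : μ.getD (k-1) 0 ≤ μ.getD (k-2) 0 := by
            have := hmono (k-2)
            rwa [show k-2+1 = k-1 by omega] at this
          by_contra hcon
          have hne : μ.getD (k-2) 0 ≠ t := by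
            intro hcon2
            have heqq : μ.getD (k-2) 0 = μ.getD (k-2+1) 0 := by
              rw [show k-2+1 = k-1 by omega]; omega
            have := hst (k-2) heqq
            omega
          exact hA ⟨by omega, by omega, by omega⟩
        exact le_trans h32 (hmono' i (k-2) (by omega))
      obtain ⟨hRP0, hlen0, hgd0, hsum0⟩ :=
        step μ (k-1) ⟨⟨hsort, hposl⟩, rfl, hst, hre⟩ (by omega) (by omega) h3j
      obtain ⟨ν', hp', hsum', hgap', heq', hhead'⟩ := ih (peel μ (k-1)) (by omega) hRP0
      have ht0 : (peel μ (k-1)).getD ((peel μ (k-1)).length - 1) 0 ≤ 2 := by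
        rcases Nat.eq_zero_or_pos (peel μ (k-1)).length with h | h
        · rw [List.getD_eq_default _ _ (by omega)]; omega
        · exact (rp_last hRP0 h).2
      have hkey : ν' ≠ [] → ν'.headD 0 + 3 ≤ 3*(k-1) + t := by
        intro hne
        obtain ⟨m₂, t₂, hcons⟩ := List.exists_cons_of_ne_nil hne
        have hm₂ : 0 < m₂ := hp'.2 m₂ (by rw [hcons]; exact List.mem_cons_self)
        have hk0 : 1 ≤ (peel μ (k-1)).length := by
          rw [← heq', hcons, sumBeta_cons, addP_length, beta_length m₂ hm₂]
          omega
        have hkk : (peel μ (k-1)).length = k-1 →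
            (peel μ (k-1)).getD ((peel μ (k-1)).length - 1) 0 + 3 ≤ t + 3 := by
          intro hkk0
          rw [hkk0, hgd0 (k-1-1), if_pos (by omega)]
          have hrr := hre (k-2)
          rw [show k-2+1 = k-1 by omega, hteq] at hrr
          rw [show k-1-1 = k-2 by omega]
          split_ifs at hrr <;> omega
        rcases Nat.eq_or_lt_of_le hlen0 with he | he
        · have := hkk he
          omega
        · omega
      refine ⟨(3*(k-1)+t) :: ν', ⟨?_, ?_⟩, ?_, ?_, ?_, ?_⟩
      · rw [List.pairwise_cons]
        refine ⟨fun b hb => ?_, hp'.1⟩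
        have h1 := le_head hp'.1 hb
        have h2 := hkey (List.ne_nil_of_mem hb)
        omega
      · intro x hx
        rcases List.mem_cons.mp hx with rfl | hx
        · omega
        · exact hp'.2 x hx
      · -- sum
        obtain ⟨a, ha⟩ : ∃ a, k - 1 = a := ⟨_, rfl⟩
        have h1 : μ.sum = ∑ i ∈ Finset.range (a+1), μ.getD i 0 :=
          (sum_getD μ (a+1) (by omega)).symm
        rw [Finset.sum_range_succ, ← ha] at h1
        rw [List.sum_cons, hsum']
        omega
      · -- Gap
        intro r hr
        cases r with
        | zero =>
          simp only [List.getD_cons_succ, List.getD_cons_zero]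
          rw [getD_zero_headD, if_neg (by omega)]
          have hne : ν' ≠ [] := by
            intro hcon
            rw [hcon] at hr
            simp at hr
          have := hkey hne
          omega
        | succ s =>
          simp only [List.getD_cons_succ]
          exact hgap' s (by simp at hr; omega)
      · -- sumBeta = μ
        rw [sumBeta_cons, heq']
        refine list_eq_of_getD ?_ ?_
        · rw [addP_length, beta_length _ (by omega)]
          have hdv : (3*(k-1)+t)/3 = k-1 := by omega
          rw [hdv]
          omega
        · intro i
          rw [addP_getD, beta_getD, hgd0 i]
          rcases Nat.lt_or_ge i (k-1) with hi | hi
          · rw [if_pos hi]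
            have e1 : bfun (3*(k-1)+t) i = 3 := by unfold bfun; split_ifs <;> omega
            have := h3j i hi
            omega
          · rw [if_neg (by omega)]
            rcases Nat.eq_or_lt_of_le hi with he | he
            · have e1 : bfun (3*(k-1)+t) i = t := by unfold bfun; split_ifs <;> omega
              rw [← he] at e1 ⊢
              omega
            · have e1 : bfun (3*(k-1)+t) i = 0 := by unfold bfun; split_ifs <;> omega
              rw [e1, List.getD_eq_default _ _ (by omega)]
      · simp only [List.headD_cons, hkeq, hteq]
        omega

/-- for `p = 3`, a partition `μ` of `n` is `3`-strict `3`-restricted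
iff `μ = β_{ν_1} + ⋯ + β_{ν_h}` for some partition `ν` of `n` with
`ν_r - ν_{r+1} ≥ 3 + δ_{3 ∣ ν_r}` for `1 ≤ r < h`. -/
theorem stmt4 (n : ℕ) (μ : List ℕ) :
    RP 3 n μ ↔
      ∃ ν : List ℕ, IsPartition ν ∧ ν.sum = n ∧ Gap 3 ν ∧ μ = sumBeta 3 ν := by
  constructor
  · intro h
    have hsum : μ.sum = n := h.2.1
    obtain ⟨ν, h1, h2, h3, h4, -⟩ := forward μ.length μ le_rfl (by rw [hsum]; exact h)
    exact ⟨ν, h1, by rw [h2, hsum], h3, h4.symm⟩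
  · rintro ⟨ν, h1, h2, h3, rfl⟩
    have := (back ν h1 h3).1
    rwa [h2] at this
end

section
/- Let p = 3 and let (ν_1, ..., ν_h) and (π_1, ..., π_k) be partitions of n with ν_r − ν_{r+1} ≥ 3 + δ_{3 | ν_r} for 1 ≤ r < h and π_r − π_{r+1} ≥ 3 + δ_{3 | π_r} for 1 ≤ r < k. Then β_{ν_1} + ... + β_{ν_h} ⊴ β_{π_1} + ... + β_{π_k} in the dominance order if and only if (ν_1, ..., ν_h) ⊵ (π_1, ..., π_k) in the dominance order. -/
/-!
Write `M_l(x) = ∑ᵢ min(x, lᵢ)` for the number of nodes of `l` in its first `x` columns. For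
decreasing lists of equal sum, `ν ⊵ π` iff `M_ν ≤ M_π` pointwise (conjugation reverses dominance).
The `r`-th partial sum of `β_m` is `min(3r, m) - δ_{m = 3r}`, so `∑ β_{νᵢ} ⊴ ∑ β_{πᵢ}` iff
`M_ν(3r) - #{i | νᵢ = 3r} ≤ M_π(3r) - #{i | πᵢ = 3r}` for all `r ≥ 1`.

The gap condition leaves at most one part of `ν` in each window `[3t, 3t + 3]`, so the slope
`#{i | νᵢ ≥ y}` of `M_ν` drops by at most one across such a window. If `M_ν(3r) > M_π(3r)`, then
`ν` has the part `3r` and `π` does not, and no other part of `ν` lies in `[3r - 3, 3r + 3]`; the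
slope of `M_ν` drops by one at `3r` while that of `M_π` does not, which forces `M_ν > M_π` at
`3r - 3` or `3r + 3` as well, where the correction terms vanish. Once `M_ν ≤ M_π` at all multiples
of `3`, the same slope comparison propagates it to the points in between. Conversely, the correction
terms are read off from the slopes of `M` on both sides of `3r`.
-/

namespace BetaDominance

def sumMin (l : List ℕ) (x : ℕ) : ℕ := (l.map (min x)).sum

def countGe (l : List ℕ) (y : ℕ) : ℕ := l.countP (y ≤ ·)

@[simp]
lemma sumMin_zero (l : List ℕ) : sumMin l 0 = 0 := by
  induction l <;> simp_all [sumMin]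

lemma sumMin_succ (l : List ℕ) (x : ℕ) : sumMin l (x + 1) = sumMin l x + countGe l (x + 1) := by
  induction l with
  | nil => rfl
  | cons a l ih =>
    simp only [sumMin, countGe, List.map_cons, List.sum_cons, List.countP_cons] at *
    split_ifs with h <;> simp only [decide_eq_true_eq] at h <;> omega

lemma countGe_anti (l : List ℕ) {y z : ℕ} (h : y ≤ z) : countGe l z ≤ countGe l y :=
  List.countP_mono_left fun x _ hx => by simp only [decide_eq_true_eq] at *; omega

lemma countGe_eq_add_count (l : List ℕ) (x : ℕ) : countGe l x = countGe l (x + 1) + l.count x := by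
  induction l with
  | nil => rfl
  | cons a l ih =>
    simp only [countGe, List.countP_cons, List.count_cons, beq_iff_eq] at *
    split_ifs <;> simp_all <;> omega

lemma sumMin_add_sum_tsub (l : List ℕ) (x : ℕ) : sumMin l x + (l.map (· - x)).sum = l.sum := by
  induction l with
  | nil => rfl
  | cons a l ih =>
    simp only [sumMin, List.map_cons, List.sum_cons] at *
    omega

lemma sum_take_le (l : List ℕ) (x t : ℕ) : (l.take t).sum ≤ (l.map (· - x)).sum + t * x := by
  induction l generalizing t with
  | nil => simp
  | cons a l ih =>
    cases t with
    | zero => simp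
    | succ t =>
      have := ih t
      simp only [List.take_succ_cons, List.sum_cons, List.map_cons, Nat.succ_mul]
      omega

lemma sum_map_tsub_eq_zero {l : List ℕ} {x : ℕ} (h : ∀ m ∈ l, m ≤ x) : (l.map (· - x)).sum = 0 :=
  List.sum_eq_zero fun y hy => by
    obtain ⟨m, hm, rfl⟩ := List.mem_map.1 hy
    have := h m hm
    omega

lemma exists_sum_take_eq {l : List ℕ} (hl : l.Pairwise (· ≥ ·)) (x : ℕ) :
    ∃ t, (l.take t).sum = (l.map (· - x)).sum + t * x := by
  induction l with
  | nil => exact ⟨0, by simp⟩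
  | cons a l ih =>
    rw [List.pairwise_cons] at hl
    by_cases hax : a ≤ x
    · refine ⟨0, ?_⟩
      rw [sum_map_tsub_eq_zero]
      · simp
      · simp only [List.mem_cons, forall_eq_or_imp]
        exact ⟨hax, fun m hm => (hl.1 m hm).trans hax⟩
    · obtain ⟨t, ht⟩ := ih hl.2
      refine ⟨t + 1, ?_⟩
      simp only [List.take_succ_cons, List.sum_cons, List.map_cons, Nat.succ_mul, ht]
      omega

lemma sum_take_eq_of_getD {l : List ℕ} (hl : l.Pairwise (· ≥ ·)) (s : ℕ) :
    (l.take s).sum = (l.map (· - l.getD s 0)).sum + s * l.getD s 0 := by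
  induction l generalizing s with
  | nil => simp
  | cons a l ih =>
    rw [List.pairwise_cons] at hl
    cases s with
    | zero =>
      rw [sum_map_tsub_eq_zero]
      · simp
      · simp only [List.getD_cons_zero, List.mem_cons, forall_eq_or_imp]
        exact ⟨le_rfl, hl.1⟩
    | succ s =>
      have hle : l.getD s 0 ≤ a := by
        rcases lt_or_ge s l.length with hs | hs
        · rw [List.getD_eq_getElem _ _ hs]
          exact hl.1 _ (List.getElem_mem hs)
        · rw [List.getD_eq_default _ _ hs]
          omega
      simp only [List.take_succ_cons, List.sum_cons, List.map_cons, List.getD_cons_succ,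
        Nat.succ_mul, ih hl.2 s]
      omega

theorem dominates_iff_sumMin_le {ν π : List ℕ} (hsum : ν.sum = π.sum)
    (hν : ν.Pairwise (· ≥ ·)) (hπ : π.Pairwise (· ≥ ·)) :
    Dominates ν π ↔ ∀ x, sumMin ν x ≤ sumMin π x := by
  have hν' := sumMin_add_sum_tsub ν
  have hπ' := sumMin_add_sum_tsub π
  refine ⟨fun h x => ?_, fun h s => ?_⟩
  · obtain ⟨t, ht⟩ := exists_sum_take_eq hπ x
    have := h t
    have := sum_take_le ν x t
    have := hν' x
    have := hπ' x
    omega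
  · have := sum_take_eq_of_getD hν s
    have := sum_take_le π (ν.getD s 0) s
    have := h (ν.getD s 0)
    have := hν' (ν.getD s 0)
    have := hπ' (ν.getD s 0)
    omega

lemma sum_take_replicate_append (k p r : ℕ) (t : List ℕ) :
    ((List.replicate k p ++ t).take r).sum = min r k * p + (t.take (r - k)).sum := by
  simp [List.take_append, List.sum_replicate]

lemma sum_take_beta_three {r : ℕ} (hr : 0 < r) (m : ℕ) :
    ((beta 3 m).take r).sum + (if m = 3 * r then 1 else 0) = min (3 * r) m := by
  rcases Nat.eq_zero_or_pos m with rfl | hm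
  · simp [beta]
    omega
  unfold beta
  rw [if_neg hm.ne']
  split_ifs <;> rw [sum_take_replicate_append] <;> generalize hj : r - _ = j <;>
    rcases j with _ | _ | j <;> simp <;> omega

lemma sum_take_eq_sum_range_getD (l : List ℕ) (r : ℕ) :
    (l.take r).sum = ∑ i ∈ Finset.range r, l.getD i 0 := by
  induction l generalizing r with
  | nil => simp
  | cons a l ih =>
    cases r with
    | zero => simp
    | succ r => rw [Finset.sum_range_succ', List.take_succ_cons, List.sum_cons, ih]; simp [add_comm]

lemma getD_addP (a b : List ℕ) (i : ℕ) : (addP a b).getD i 0 = a.getD i 0 + b.getD i 0 := by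
  by_cases hi : i < max a.length b.length
  · rw [List.getD_eq_getElem _ 0 (by simpa [addP] using hi)]
    simp [addP]
  · rw [List.getD_eq_default _ _ (by simp [addP]; omega), List.getD_eq_default _ _ (by omega),
      List.getD_eq_default _ _ (by omega)]

lemma sum_take_addP (a b : List ℕ) (r : ℕ) :
    ((addP a b).take r).sum = (a.take r).sum + (b.take r).sum := by
  simp only [sum_take_eq_sum_range_getD, getD_addP, Finset.sum_add_distrib]

lemma sum_take_sumBeta_three {r : ℕ} (hr : 0 < r) (l : List ℕ) :
    ((sumBeta 3 l).take r).sum + l.count (3 * r) = sumMin l (3 * r) := by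
  induction l with
  | nil => simp [sumBeta, sumMin]
  | cons m l ih =>
    have hβ := sum_take_beta_three hr m
    rw [sumBeta, List.map_cons, List.foldr_cons, sum_take_addP]
    simp only [sumBeta, sumMin, List.count_cons, List.map_cons, List.sum_cons, beq_iff_eq] at *
    split_ifs at hβ ⊢ <;> omega

lemma dominates_sumBeta_three_iff {ν π : List ℕ} :
    Dominates (sumBeta 3 π) (sumBeta 3 ν) ↔
      ∀ r, 0 < r → sumMin ν (3 * r) + π.count (3 * r) ≤ sumMin π (3 * r) + ν.count (3 * r) := by
  refine ⟨fun h r hr => ?_, fun h r => ?_⟩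
  · have := h r
    have := sum_take_sumBeta_three hr ν
    have := sum_take_sumBeta_three hr π
    omega
  · rcases Nat.eq_zero_or_pos r with rfl | hr
    · simp
    have := h r hr
    have := sum_take_sumBeta_three hr ν
    have := sum_take_sumBeta_three hr π
    omega

lemma sumMin_add_le_of_countGe_le (l l' : List ℕ) {x y : ℕ} (hxy : x ≤ y)
    (h : countGe l (x + 1) ≤ countGe l' y) :
    sumMin l y + sumMin l' x ≤ sumMin l' y + sumMin l x := by
  induction y, hxy using Nat.le_induction with
  | base => omega
  | succ y hxy ih =>
    have := ih (h.trans (countGe_anti l' y.le_succ))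
    have := (countGe_anti l (by omega : x + 1 ≤ y + 1)).trans h
    rw [sumMin_succ, sumMin_succ]
    omega

/-- If `l` has at most one part in `[x + 1, y - 1]`, then `sumMin l ≤ sumMin l'` at `x` and `y`
implies it on all of `[x, y]`. -/
lemma sumMin_le_of_endpoints (l l' : List ℕ) {x y z : ℕ} (hxz : x ≤ z) (hzy : z ≤ y)
    (hl : countGe l (x + 1) ≤ countGe l y + 1)
    (hx : sumMin l x ≤ sumMin l' x) (hy : sumMin l y ≤ sumMin l' y) :
    sumMin l z ≤ sumMin l' z := by
  by_cases hslope : countGe l (x + 1) ≤ countGe l' z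
  · have := sumMin_add_le_of_countGe_le l l' hxz hslope
    omega
  · have := countGe_anti l' (by omega : z ≤ z + 1)
    have := sumMin_add_le_of_countGe_le l' l hzy (by omega)
    omega

def GapRel (x y : ℕ) : Prop := y + 3 ≤ x ∧ (3 ∣ x → y + 4 ≤ x)

instance : IsTrans ℕ GapRel :=
  ⟨fun _ _ _ ⟨hab, _⟩ ⟨hbc, _⟩ => ⟨by omega, fun _ => by omega⟩⟩

lemma Gap.pairwise {l : List ℕ} (hg : Gap 3 l) : l.Pairwise GapRel := by
  rw [← List.isChain_iff_pairwise, List.isChain_iff_getElem]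
  intro i hi
  have h := hg i (by omega)
  rw [List.getD_eq_getElem l 0 (by omega), List.getD_eq_getElem l 0 (by omega)] at h
  exact ⟨by split_ifs at h <;> omega, fun hd => by rw [if_pos hd] at h; omega⟩

lemma countP_le_one_of_pairwise {α : Type*} {R : α → α → Prop} {P : α → Bool} {l : List α}
    (hl : l.Pairwise R) (hR : ∀ x y, R x y → P x → ¬ P y) : l.countP P ≤ 1 := by
  induction l with
  | nil => simp
  | cons a l ih =>
    rw [List.pairwise_cons] at hl
    rw [List.countP_cons]
    split_ifs with ha
    · have : l.countP P = 0 :=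
        List.countP_eq_zero.2 fun x hx => hR a x (hl.1 x hx) ha
      omega
    · exact ih hl.2

lemma countGe_le_countGe_add_one {l : List ℕ} (hl : l.Pairwise GapRel) (t : ℕ) :
    countGe l (3 * t) ≤ countGe l (3 * t + 4) + 1 := by
  have hsplit : countGe l (3 * t) =
      countGe l (3 * t + 4) + l.countP (fun m => 3 * t ≤ m ∧ m < 3 * t + 4) := by
    induction l with
    | nil => rfl
    | cons a l ih =>
      simp only [countGe, List.countP_cons] at *
      split_ifs <;> simp_all <;> omega
  have hwindow : l.countP (fun m => 3 * t ≤ m ∧ m < 3 * t + 4) ≤ 1 :=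
    countP_le_one_of_pairwise hl fun x y ⟨hyx, hdvd⟩ hx hy => by
      simp only [decide_eq_true_eq] at hx hy
      have : x = 3 * t + 3 := by omega
      have := hdvd (by omega)
      omega
  omega

lemma pairwise_gt_of_gapRel {l : List ℕ} (hl : l.Pairwise GapRel) : l.Pairwise (· > ·) :=
  hl.imp fun h => by have := h.1; omega

lemma count_le_one {l : List ℕ} (hl : l.Pairwise GapRel) (x : ℕ) : l.count x ≤ 1 :=
  List.nodup_iff_count_le_one.1 ((pairwise_gt_of_gapRel hl).imp ne_of_gt) x

lemma sumMin_mul_three_le {ν π : List ℕ} (hν : ν.Pairwise GapRel)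
    (H : ∀ r, 0 < r → sumMin ν (3 * r) + π.count (3 * r) ≤ sumMin π (3 * r) + ν.count (3 * r))
    (r : ℕ) : sumMin ν (3 * r) ≤ sumMin π (3 * r) := by
  have hfree : ∀ a, 3 ∣ a → ν.count a = 0 → sumMin ν a ≤ sumMin π a := by
    rintro _ ⟨_ | r, rfl⟩ h
    · simp
    · have := H (r + 1) (by omega)
      omega
  obtain _ | q := r
  · simp
  change sumMin ν (3 * q + 3) ≤ sumMin π (3 * q + 3)
  by_contra hlt
  have hH : sumMin ν (3 * q + 3) + π.count (3 * q + 3) ≤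
      sumMin π (3 * q + 3) + ν.count (3 * q + 3) := H (q + 1) (by omega)
  have hw₀ : countGe ν (3 * q) ≤ countGe ν (3 * q + 4) + 1 := countGe_le_countGe_add_one hν q
  have hw₁ : countGe ν (3 * q + 3) ≤ countGe ν (3 * q + 7) + 1 :=
    countGe_le_countGe_add_one hν (q + 1)
  have e₀ : countGe ν (3 * q) = countGe ν (3 * q + 1) + ν.count (3 * q) :=
    countGe_eq_add_count ν _
  have e₃ : countGe ν (3 * q + 3) = countGe ν (3 * q + 4) + ν.count (3 * q + 3) :=
    countGe_eq_add_count ν _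
  have e₆ : countGe ν (3 * q + 6) = countGe ν (3 * q + 7) + ν.count (3 * q + 6) :=
    countGe_eq_add_count ν _
  have eπ : countGe π (3 * q + 3) = countGe π (3 * q + 4) + π.count (3 * q + 3) :=
    countGe_eq_add_count π _
  have a₁ := countGe_anti ν (by omega : 3 * q + 1 ≤ 3 * q + 3)
  have a₂ := countGe_anti ν (by omega : 3 * q + 4 ≤ 3 * q + 6)
  have hpart : ν.count (3 * q + 3) = 1 ∧ π.count (3 * q + 3) = 0 := by
    have := count_le_one hν (3 * q + 3)
    omega
  have h₀ := hfree (3 * q) (dvd_mul_right 3 q) (by omega)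
  have h₆ := hfree (3 * q + 6) ⟨q + 2, by ring⟩ (by omega)
  -- `sumMin ν` has slope `countGe ν (3q + 3)` on `(3q, 3q + 3]` and one less on `(3q + 3, 3q + 6]`
  rcases le_or_gt (countGe ν (3 * q + 1)) (countGe π (3 * q + 3)) with hs | hs
  · have := sumMin_add_le_of_countGe_le ν π (by omega : 3 * q ≤ 3 * q + 3) hs
    omega
  · have := sumMin_add_le_of_countGe_le π ν (by omega : 3 * q + 3 ≤ 3 * q + 6)
      (show countGe π (3 * q + 4) ≤ countGe ν (3 * q + 6) by omega)
    omega

lemma sumMin_le_of_gap {ν π : List ℕ} (hν : ν.Pairwise GapRel)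
    (H : ∀ r, 0 < r → sumMin ν (3 * r) + π.count (3 * r) ≤ sumMin π (3 * r) + ν.count (3 * r))
    (x : ℕ) : sumMin ν x ≤ sumMin π x := by
  set t := x / 3
  have hwindow : countGe ν (3 * t + 1) ≤ countGe ν (3 * t + 3) + 1 := by
    have := countGe_le_countGe_add_one hν t
    have := countGe_anti ν (by omega : 3 * t ≤ 3 * t + 1)
    have := countGe_anti ν (by omega : 3 * t + 3 ≤ 3 * t + 4)
    omega
  exact sumMin_le_of_endpoints ν π (by omega : 3 * t ≤ x) (by omega : x ≤ 3 * t + 3) hwindow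
    (sumMin_mul_three_le hν H t) (sumMin_mul_three_le hν H (t + 1))

lemma sumMin_add_count_le {ν π : List ℕ} (h : ∀ y, sumMin ν y ≤ sumMin π y) {x : ℕ}
    (hx : 0 < x) (hπ : π.count x ≤ 1) :
    sumMin ν x + π.count x ≤ sumMin π x + ν.count x := by
  obtain ⟨y, rfl⟩ : ∃ y, x = y + 1 := ⟨x - 1, by omega⟩
  have := h y
  have := h (y + 1)
  have := h (y + 1 + 1)
  have := sumMin_succ ν y
  have := sumMin_succ π y
  have := sumMin_succ ν (y + 1)
  have := sumMin_succ π (y + 1)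
  have := countGe_eq_add_count ν (y + 1)
  have := countGe_eq_add_count π (y + 1)
  omega

theorem sumMin_le_iff_of_gap {ν π : List ℕ} (hν : ν.Pairwise GapRel) (hπ : π.Pairwise GapRel) :
    (∀ x, sumMin ν x ≤ sumMin π x) ↔
      ∀ r, 0 < r → sumMin ν (3 * r) + π.count (3 * r) ≤ sumMin π (3 * r) + ν.count (3 * r) :=
  ⟨fun h r hr => sumMin_add_count_le h (by omega) (count_le_one hπ _), sumMin_le_of_gap hν⟩

end BetaDominance

open BetaDominance

theorem stmt5_general (n : ℕ) (ν π : List ℕ)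
    (hνs : ν.sum = n) (hνg : Gap 3 ν)
    (hπs : π.sum = n) (hπg : Gap 3 π) :
    Dominates (sumBeta 3 π) (sumBeta 3 ν) ↔ Dominates ν π := by
  have hν := hνg.pairwise
  have hπ := hπg.pairwise
  rw [dominates_sumBeta_three_iff, dominates_iff_sumMin_le (hνs.trans hπs.symm)
    ((pairwise_gt_of_gapRel hν).imp le_of_lt) ((pairwise_gt_of_gapRel hπ).imp le_of_lt),
    sumMin_le_iff_of_gap hν hπ]

/-- for `p = 3` and partitions `ν, π` of `n` with gaps
`≥ 3 + δ_{3 ∣ ·}`, one has `β_{ν_1} + ⋯ + β_{ν_h} ⊴ β_{π_1} + ⋯ + β_{π_k}`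
iff `ν ⊵ π` in the dominance order. -/
theorem stmt5 (n : ℕ) (ν π : List ℕ)
    (hν : IsPartition ν) (hνs : ν.sum = n) (hνg : Gap 3 ν)
    (hπ : IsPartition π) (hπs : π.sum = n) (hπg : Gap 3 π) :
    Dominates (sumBeta 3 π) (sumBeta 3 ν) ↔ Dominates ν π :=
  stmt5_general n ν π hνs hνg hπs hπg
end

section
/- Let p ≥ 5 be an odd prime and n > p. Set m = ⌊(n−1)/2⌋ − δ, where δ = 1 if n ≡ p (mod 2p) and δ = 0 otherwise, and let ℓ = (p−1)/2. For 1 ≤ j ≤ m, write n − j = bp + c with 2 ≤ c ≤ p+1 and j = dp + e with 1 ≤ e ≤ p. Then for every 1 ≤ j ≤ m it is not the case that b = d, c = ℓ + 1 and e = ℓ. -/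
/-- for an odd prime `p ≥ 5`, `n > p`,
`m = ⌊(n-1)/2⌋ - δ_{n ≡ p (mod 2p)}` and `1 ≤ j ≤ m`, writing
`n - j = bp + c` with `2 ≤ c ≤ p + 1` and `j = dp + e` with `1 ≤ e ≤ p`,
it is not the case that `b = d`, `c = ℓ + 1` and `e = ℓ`, where `ℓ = (p-1)/2`. -/
theorem stmt9 (p n j b c d e : ℕ) (hp : p.Prime) (hp5 : 5 ≤ p) (hn : p < n)
    (hj1 : 1 ≤ j)
    (hj2 : j ≤ (n - 1) / 2 - (if n % (2 * p) = p then 1 else 0))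
    (hbc : n - j = b * p + c) (hc1 : 2 ≤ c) (hc2 : c ≤ p + 1)
    (hde : j = d * p + e) (he1 : 1 ≤ e) (he2 : e ≤ p) :
    ¬ (b = d ∧ c = (p - 1) / 2 + 1 ∧ e = (p - 1) / 2) := by
  rintro ⟨rfl, hc, he⟩
  obtain ⟨k, hk⟩ := hp.odd_of_ne_two (by omega)
  have hjn : j ≤ n := by omega
  have hn' : n = p + b * (2 * p) := by
    have h : b * (2 * p) = 2 * (b * p) := by ring
    omega
  have hmod : n % (2 * p) = p := by
    rw [hn', Nat.add_mul_mod_self_right, Nat.mod_eq_of_lt (by omega)]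
  rw [hmod, if_pos rfl] at hj2
  have h : b * (2 * p) = 2 * (b * p) := by ring
  omega
end

section
/- Let p ≥ 3 and let λ = (λ_1, λ_2) be a strict partition of n with λ_1 > λ_2 > 0 and λ_1 − λ_2 ≥ p + δ_{p | λ_1}. Let h(λ) = 2 be the number of parts, h_{p'}(λ) the number of parts not divisible by p, a_0(λ) = (n − h(λ)) mod 2, and a_p(λ^R) = (n − h_{p'}(λ^R)) mod 2 where λ^R = β_{λ_1} + β_{λ_2}. Then the exponent (h(λ) − h_{p'}(λ) + a_0(λ) − a_p(λ^R))/2 is a nonnegative integer; it equals 1 if either (both λ_1 and λ_2 are divisible by p) or (exactly one of λ_1, λ_2 is divisible by p and n is odd), and 0 otherwise. -/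
lemma addP_nil (x : List ℕ) : addP x [] = x := by
  apply List.ext_getElem
  · simp [addP]
  · intro i h1 h2
    simp [addP, List.getD_eq_getElem]

lemma addP_eq (x z y : List ℕ) (h : y.length = x.length) :
    addP (x ++ z) y = List.zipWith (· + ·) x y ++ z := by
  apply List.ext_getElem
  · simp [addP]; omega
  · intro i h1 h2
    have hlen : i < x.length + z.length := by
      simp [addP] at h1; omega
    simp only [addP, List.getElem_ofFn]
    rcases lt_or_ge i x.length with hi | hi
    · rw [List.getD_append _ _ _ _ hi,
        List.getD_eq_getElem _ _ (by omega : i < y.length),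
        List.getD_eq_getElem _ _ hi,
        List.getElem_append_left (show i < (List.zipWith (· + ·) x y).length by simp; omega),
        List.getElem_zipWith]
    · rw [List.getD_eq_default y _ (by omega),
        List.getD_append_right _ _ _ _ hi, add_zero,
        List.getD_eq_getElem _ _ (show i - x.length < z.length by omega),
        List.getElem_append_right (show (List.zipWith (· + ·) x y).length ≤ i by simp; omega)]
      congr 1
      simp; omega

lemma zipWith_rep (k p : ℕ) :
    List.zipWith (· + ·) (List.replicate k p) (List.replicate k p) = List.replicate k (p + p) := by
  induction k with
  | zero => simp
  | succ n ih => simp [List.replicate_succ, ih]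

lemma not_dvd_small {p c : ℕ} (h1 : 0 < c) (h2 : c < p) : ¬ p ∣ c :=
  fun h => absurd (Nat.le_of_dvd h1 h) (by omega)

lemma not_dvd_padd {p c : ℕ} (h1 : 0 < c) (h2 : c < p) : ¬ p ∣ (p + c) := by
  rw [Nat.dvd_add_right dvd_rfl]; exact not_dvd_small h1 h2

lemma div_gap {p a b : ℕ} (hp : 0 < p) (hd : p ∣ b) (hg : a + p + 1 ≤ b) :
    a / p + 2 ≤ b / p := by
  have h3 : (a/p+1)*p < (b/p)*p := by
    calc (a/p+1)*p = a/p*p + p := by ring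
    _ ≤ a + p := Nat.add_le_add_right (Nat.div_mul_le_self a p) p
    _ < b := by omega
    _ = b/p * p := (Nat.div_mul_cancel hd).symm
  have := lt_of_mul_lt_mul_right h3 (Nat.zero_le p)
  omega

lemma sub_splitA {a b : ℕ} (h : b + 2 ≤ a) : a - 1 = (b + 1) + (a - 1 - (b + 1)) := by omega
lemma sub_splitB {a b : ℕ} (h : b + 1 ≤ a) : a = (b + 1) + (a - (b + 1)) := by omega
lemma sub_splitC {a b : ℕ} (h : b + 2 ≤ a) (hb : 1 ≤ b) :
    a - 1 = ((b - 1) + 2) + (a - 1 - (b + 1)) := by omega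
lemma sub_splitD {a b : ℕ} (h : b + 1 ≤ a) (hb : 1 ≤ b) :
    a = ((b - 1) + 2) + (a - (b + 1)) := by omega

/-- for a strict two-part partition `λ = (λ₁, λ₂)` of `n` with
`λ₁ - λ₂ ≥ p + δ_{p ∣ λ₁}`, the exponent
`(h(λ) - h_{p'}(λ) + a₀(λ) - a_p(λ^R))/2` (with `h(λ) = 2`,
`a₀(λ) ≡ n - 2`, `a_p(λ^R) ≡ n - h_{p'}(λ^R) (mod 2)`, `λ^R = β_{λ₁} + β_{λ₂}`)
is a nonnegative integer, equal to `1` if both parts are divisible by `p`, or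
exactly one is and `n` is odd, and equal to `0` otherwise. -/
theorem stmt12 (p n l1 l2 : ℕ) (hp : 3 ≤ p) (h2 : 0 < l2) (h1 : l2 < l1)
    (hgap : l2 + p + (if p ∣ l1 then 1 else 0) ≤ l1) (hn : l1 + l2 = n) :
    ∃ E : ℕ,
      ((2 : ℤ) - (hp' p [l1, l2] : ℤ) + (((n - 2) % 2 : ℕ) : ℤ)
          - (((n - hp' p (sumBeta p [l1, l2])) % 2 : ℕ) : ℤ) = 2 * E) ∧
      E = (if (p ∣ l1 ∧ p ∣ l2) ∨ (Xor (p ∣ l1) (p ∣ l2) ∧ Odd n)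
           then 1 else 0) := by
  have hp0 : 0 < p := by omega
  have hl1 : l1 ≠ 0 := by omega
  have hl2 : l2 ≠ 0 := by omega
  have hkey : sumBeta p [l1, l2] = addP (beta p l1) (beta p l2) := by
    simp [sumBeta, addP_nil]
  by_cases d1 : p ∣ l1 <;> by_cases d2 : p ∣ l2
  · -- both divisible
    rw [if_pos d1] at hgap
    have hc1 : l1 % p = 0 := Nat.mod_eq_zero_of_dvd d1
    have hc2 : l2 % p = 0 := Nat.mod_eq_zero_of_dvd d2
    have hone : 1 ≤ l2 / p := (Nat.one_le_div_iff hp0).mpr (Nat.le_of_dvd h2 d2)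
    have hlen : l2/p + 2 ≤ l1/p := div_gap hp0 d1 (by omega)
    have hb2 : beta p l2 = List.replicate (l2/p - 1) p ++ [p-1, 1] := by
      rw [beta, if_neg hl2, if_pos hc2]
    have hb1 : beta p l1 = (List.replicate (l2/p - 1) p ++ [p, p]) ++
        (List.replicate (l1/p - 1 - (l2/p + 1)) p ++ [p-1, 1]) := by
      rw [beta, if_neg hl1, if_pos hc1,
        sub_splitC hlen hone]
      simp [List.replicate_add, List.replicate_succ']
      omega
    have hsum : sumBeta p [l1, l2] = (List.replicate (l2/p - 1) (p+p) ++ [p + (p-1), p + 1]) ++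
        (List.replicate (l1/p - 1 - (l2/p + 1)) p ++ [p-1, 1]) := by
      rw [hkey, hb1, hb2, addP_eq _ _ _ (by simp),
        List.zipWith_append (by simp), zipWith_rep]
      simp
    have hR : hp' p (sumBeta p [l1, l2]) = 4 := by
      rw [hsum]
      simp [hp', List.filter_append, List.filter_replicate,
        not_dvd_padd (show 0 < p - 1 by omega) (show p - 1 < p by omega),
        not_dvd_padd (show (0:ℕ) < 1 by omega) (show (1:ℕ) < p by omega),
        not_dvd_small (show 0 < p - 1 by omega) (show p - 1 < p by omega),
        not_dvd_small (show (0:ℕ) < 1 by omega) (show (1:ℕ) < p by omega),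
        (dvd_add (dvd_refl p) (dvd_refl p) : p ∣ p + p), dvd_refl]
    have hL : hp' p [l1, l2] = 0 := by simp [hp', d1, d2]
    refine ⟨1, ?_, ?_⟩
    · rw [hL, hR]
      have hplarge : p ≤ l2 := Nat.le_of_dvd h2 d2
      have h4 : 4 ≤ n := by omega
      clear * - h4
      omega
    · rw [if_pos (Or.inl ⟨d1, d2⟩)]
  · -- p ∣ l1, ¬ p ∣ l2
    rw [if_pos d1] at hgap
    have hc1 : l1 % p = 0 := Nat.mod_eq_zero_of_dvd d1
    have hc2 : l2 % p ≠ 0 := fun h => d2 (Nat.dvd_of_mod_eq_zero h)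
    have hmlt2 : l2 % p < p := Nat.mod_lt _ hp0
    have hlen : l2/p + 2 ≤ l1/p := div_gap hp0 d1 (by omega)
    have hb2 : beta p l2 = List.replicate (l2/p) p ++ [l2 % p] := by
      rw [beta, if_neg hl2, if_neg hc2]
    have hb1 : beta p l1 = (List.replicate (l2/p) p ++ [p]) ++
        (List.replicate (l1/p - 1 - (l2/p + 1)) p ++ [p-1, 1]) := by
      rw [beta, if_neg hl1, if_pos hc1,
        sub_splitA hlen]
      simp [List.replicate_add, List.replicate_succ']
    have hsum : sumBeta p [l1, l2] = (List.replicate (l2/p) (p+p) ++ [p + l2 % p]) ++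
        (List.replicate (l1/p - 1 - (l2/p + 1)) p ++ [p-1, 1]) := by
      rw [hkey, hb1, hb2, addP_eq _ _ _ (by simp),
        List.zipWith_append (by simp), zipWith_rep]
      simp
    have hR : hp' p (sumBeta p [l1, l2]) = 3 := by
      rw [hsum]
      simp [hp', List.filter_append, List.filter_replicate,
        not_dvd_padd (show 0 < l2 % p by omega) hmlt2,
        not_dvd_small (show 0 < p - 1 by omega) (show p - 1 < p by omega),
        not_dvd_small (show (0:ℕ) < 1 by omega) (show (1:ℕ) < p by omega),
        (dvd_add (dvd_refl p) (dvd_refl p) : p ∣ p + p), dvd_refl]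
    have hL : hp' p [l1, l2] = 1 := by simp [hp', d1, d2]
    refine ⟨n % 2, ?_, ?_⟩
    · rw [hL, hR]
      have h3 : 3 ≤ n := by omega
      clear * - h3
      omega
    · rcases Nat.even_or_odd n with he | ho
      · rw [if_neg, Nat.even_iff.mp he]
        rintro (⟨_, hb⟩ | ⟨_, hodd⟩)
        · exact d2 hb
        · exact (Nat.not_odd_iff_even.mpr he) hodd
      · rw [if_pos (Or.inr ⟨Or.inl ⟨d1, d2⟩, ho⟩), Nat.odd_iff.mp ho]
  · -- ¬ p ∣ l1, p ∣ l2
    rw [if_neg d1] at hgap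
    have hc1 : l1 % p ≠ 0 := fun h => d1 (Nat.dvd_of_mod_eq_zero h)
    have hc2 : l2 % p = 0 := Nat.mod_eq_zero_of_dvd d2
    have hmlt1 : l1 % p < p := Nat.mod_lt _ hp0
    have hone : 1 ≤ l2 / p := (Nat.one_le_div_iff hp0).mpr (Nat.le_of_dvd h2 d2)
    have hlen : l2/p + 1 ≤ l1/p := by
      have h3 : (l2 + p) / p ≤ l1 / p := Nat.div_le_div_right (by omega)
      rwa [Nat.add_div_right _ hp0] at h3
    have hb2 : beta p l2 = List.replicate (l2/p - 1) p ++ [p-1, 1] := by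
      rw [beta, if_neg hl2, if_pos hc2]
    have hb1 : beta p l1 = (List.replicate (l2/p - 1) p ++ [p, p]) ++
        (List.replicate (l1/p - (l2/p + 1)) p ++ [l1 % p]) := by
      rw [beta, if_neg hl1, if_neg hc1,
        sub_splitD hlen hone]
      simp [List.replicate_add, List.replicate_succ']
      omega
    have hsum : sumBeta p [l1, l2] = (List.replicate (l2/p - 1) (p+p) ++ [p + (p-1), p + 1]) ++
        (List.replicate (l1/p - (l2/p + 1)) p ++ [l1 % p]) := by
      rw [hkey, hb1, hb2, addP_eq _ _ _ (by simp),
        List.zipWith_append (by simp), zipWith_rep]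
      simp
    have hR : hp' p (sumBeta p [l1, l2]) = 3 := by
      rw [hsum]
      simp [hp', List.filter_append, List.filter_replicate,
        not_dvd_padd (show 0 < p - 1 by omega) (show p - 1 < p by omega),
        not_dvd_padd (show (0:ℕ) < 1 by omega) (show (1:ℕ) < p by omega),
        not_dvd_small (show 0 < l1 % p by omega) hmlt1,
        (dvd_add (dvd_refl p) (dvd_refl p) : p ∣ p + p), dvd_refl]
    have hL : hp' p [l1, l2] = 1 := by simp [hp', d1, d2]
    refine ⟨n % 2, ?_, ?_⟩
    · rw [hL, hR]
      have h3 : 3 ≤ n := by omega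
      clear * - h3
      omega
    · rcases Nat.even_or_odd n with he | ho
      · rw [if_neg, Nat.even_iff.mp he]
        rintro (⟨ha, _⟩ | ⟨_, hodd⟩)
        · exact d1 ha
        · exact (Nat.not_odd_iff_even.mpr he) hodd
      · rw [if_pos (Or.inr ⟨Or.inr ⟨d2, d1⟩, ho⟩), Nat.odd_iff.mp ho]
  · -- neither divisible
    rw [if_neg d1] at hgap
    have hc1 : l1 % p ≠ 0 := fun h => d1 (Nat.dvd_of_mod_eq_zero h)
    have hc2 : l2 % p ≠ 0 := fun h => d2 (Nat.dvd_of_mod_eq_zero h)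
    have hmlt1 : l1 % p < p := Nat.mod_lt _ hp0
    have hmlt2 : l2 % p < p := Nat.mod_lt _ hp0
    have hlen : l2/p + 1 ≤ l1/p := by
      have h3 : (l2 + p) / p ≤ l1 / p := Nat.div_le_div_right (by omega)
      rwa [Nat.add_div_right _ hp0] at h3
    have hb2 : beta p l2 = List.replicate (l2/p) p ++ [l2 % p] := by
      rw [beta, if_neg hl2, if_neg hc2]
    have hb1 : beta p l1 = (List.replicate (l2/p) p ++ [p]) ++
        (List.replicate (l1/p - (l2/p + 1)) p ++ [l1 % p]) := by
      rw [beta, if_neg hl1, if_neg hc1,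
        sub_splitB hlen]
      simp [List.replicate_add, List.replicate_succ']
    have hsum : sumBeta p [l1, l2] = (List.replicate (l2/p) (p+p) ++ [p + l2 % p]) ++
        (List.replicate (l1/p - (l2/p + 1)) p ++ [l1 % p]) := by
      rw [hkey, hb1, hb2, addP_eq _ _ _ (by simp),
        List.zipWith_append (by simp), zipWith_rep]
      simp
    have hR : hp' p (sumBeta p [l1, l2]) = 2 := by
      rw [hsum]
      simp [hp', List.filter_append, List.filter_replicate,
        not_dvd_padd (show 0 < l2 % p by omega) hmlt2,
        not_dvd_small (show 0 < l1 % p by omega) hmlt1,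
        (dvd_add (dvd_refl p) (dvd_refl p) : p ∣ p + p), dvd_refl]
    have hL : hp' p [l1, l2] = 2 := by simp [hp', d1, d2]
    refine ⟨0, ?_, ?_⟩
    · rw [hL, hR]
      have h3 : 3 ≤ n := by omega
      clear * - h3
      omega
    · rw [if_neg]
      rintro (⟨ha, _⟩ | ⟨(⟨ha, _⟩ | ⟨hb, _⟩), _⟩)
      · exact d1 ha
      · exact d1 ha
      · exact d2 hb
end

section
/- Let p ≥ 3 and let λ, μ be strict partitions of n each with at most two parts, λ = (λ_1, λ_2), μ = (μ_1, μ_2), both satisfying λ_1 − λ_2 ≥ p + δ_{p|λ_1} and μ_1 − μ_2 ≥ p + δ_{p|μ_1} (where λ_2, μ_2 ≥ 0 and a zero second part means a one-part partition). Then β_{λ_1} + β_{λ_2} ⊴ β_{μ_1} + β_{μ_2} in the dominance order if and only if λ_1 ≥ μ_1. -/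
/-!
The `r`-th partial sum of `β_a` is `min (r p) a`, minus one exactly when `r p = a` (then `β_a`
ends in `p - 1, 1` instead of `p`). So `β_{l₁} + β_{l₂} ⊴ β_{m₁} + β_{m₂}` compares
`min t l₁ + min t l₂` with `min t m₁ + min t m₂` at the multiples `t` of `p`, up to these
corrections. If `m₁ ≤ l₁`, then `l₂ ≤ m₂` and the comparison holds for every `t`. If `m₁ > l₁`,
take `t` the least multiple of `p` above `l₂`: the gap `l₁ - l₂ ≥ p + δ_{p ∣ l₁}` puts `t` strictly
below `l₁`, and the left side exceeds the right by `l₂ - m₂ > 0`.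
-/

lemma List.sum_take_eq_sum_range_getD (l : List ℕ) (r : ℕ) :
    (l.take r).sum = ∑ i ∈ Finset.range r, l.getD i 0 := by
  induction l generalizing r with
  | nil => simp
  | cons a t ih =>
    cases r with
    | zero => simp
    | succ r =>
      simp only [List.take_succ_cons, List.sum_cons, Finset.sum_range_succ',
        List.getD_cons_succ, List.getD_cons_zero, ih]
      omega

lemma getD_addP (x y : List ℕ) (i : ℕ) :
    (addP x y).getD i 0 = x.getD i 0 + y.getD i 0 := by
  unfold addP
  by_cases h : i < max x.length y.length
  · rw [List.getD_eq_getElem _ _ (by simpa using h)]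
    simp
  · rw [not_lt] at h
    rw [List.getD_eq_default _ _ (by simpa using h),
      List.getD_eq_default _ _ (by omega), List.getD_eq_default _ _ (by omega)]

lemma sum_take_addP (x y : List ℕ) (r : ℕ) :
    ((addP x y).take r).sum = (x.take r).sum + (y.take r).sum := by
  simp only [List.sum_take_eq_sum_range_getD, getD_addP, Finset.sum_add_distrib]

lemma List.sum_take_replicate_append (r q p : ℕ) (l : List ℕ) :
    ((List.replicate q p ++ l).take r).sum = min r q * p + (l.take (r - q)).sum := by
  simp [List.take_append, List.take_replicate]

lemma beta_mul_succ {p : ℕ} (hp : 0 < p) (q : ℕ) :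
    beta p ((q + 1) * p) = List.replicate q p ++ [p - 1, 1] := by
  simp [beta, Nat.mul_div_cancel _ hp, hp.ne']

lemma beta_of_mod_ne_zero {p a : ℕ} (h : a % p ≠ 0) :
    beta p a = List.replicate (a / p) p ++ [a % p] := by
  have ha : a ≠ 0 := by rintro rfl; simp at h
  simp [beta, h, ha]

lemma sum_take_beta_mul_succ {p : ℕ} (hp : 0 < p) (q r : ℕ) :
    ((beta p ((q + 1) * p)).take r).sum =
      min (r * p) ((q + 1) * p) - if r * p = (q + 1) * p then 1 else 0 := by
  have hsucc : (q + 1) * p = q * p + p := by ring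
  rw [beta_mul_succ hp, List.sum_take_replicate_append]
  rcases lt_trichotomy r (q + 1) with hr | rfl | hr
  · have : r * p ≤ q * p := Nat.mul_le_mul_right p (by omega)
    rw [min_eq_left (by omega : r ≤ q), Nat.sub_eq_zero_of_le (by omega : r ≤ q)]
    simp only [List.take_zero, List.sum_nil, add_zero]
    split_ifs <;> omega
  · rw [min_eq_right q.le_succ, min_self, if_pos rfl, Nat.add_sub_cancel_left]
    simp only [List.take_succ_cons, List.take_zero, List.sum_cons, List.sum_nil]
    omega
  · have : (q + 2) * p ≤ r * p := Nat.mul_le_mul_right p hr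
    have hsucc2 : (q + 2) * p = q * p + p + p := by ring
    rw [min_eq_right (by omega : q ≤ r), List.take_of_length_le (by simp; omega)]
    simp only [List.sum_cons, List.sum_nil]
    split_ifs <;> omega

lemma sum_take_beta_of_mod_ne_zero {p a : ℕ} (hp : 0 < p) (hpa : a % p ≠ 0) (r : ℕ) :
    ((beta p a).take r).sum = min (r * p) a - if r * p = a then 1 else 0 := by
  have hdiv := Nat.div_add_mod' a p
  have hmod := Nat.mod_lt a hp
  rw [beta_of_mod_ne_zero hpa, List.sum_take_replicate_append]
  rcases le_or_gt r (a / p) with hr | hr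
  · have : r * p ≤ a / p * p := Nat.mul_le_mul_right p hr
    rw [min_eq_left hr, Nat.sub_eq_zero_of_le hr]
    simp only [List.take_zero, List.sum_nil, add_zero]
    split_ifs <;> omega
  · have : (a / p + 1) * p ≤ r * p := Nat.mul_le_mul_right p hr
    have hsucc : (a / p + 1) * p = a / p * p + p := by ring
    rw [min_eq_right hr.le, List.take_of_length_le (by simp; omega)]
    simp only [List.sum_cons, List.sum_nil]
    split_ifs <;> omega

lemma sum_take_beta {p : ℕ} (hp : 0 < p) (a r : ℕ) :
    ((beta p a).take r).sum = min (r * p) a - if r * p = a then 1 else 0 := by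
  by_cases hpa : a % p = 0
  · obtain ⟨k, rfl⟩ := Nat.dvd_of_mod_eq_zero hpa
    cases k with
    | zero => simp [beta]
    | succ q => rw [mul_comm p, sum_take_beta_mul_succ hp]
  · exact sum_take_beta_of_mod_ne_zero hp hpa r

theorem stmt14_general (p n l1 l2 m1 m2 : ℕ) (hp : 3 ≤ p)
    (hln : l1 + l2 = n) (hmn : m1 + m2 = n)
    (hgl : l2 + p + (if p ∣ l1 then 1 else 0) ≤ l1)
    (hgm : m2 + p + (if p ∣ m1 then 1 else 0) ≤ m1) :
    Dominates (addP (beta p m1) (beta p m2)) (addP (beta p l1) (beta p l2)) ↔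
      m1 ≤ l1 := by
  have hp0 : 0 < p := by omega
  simp only [Dominates, sum_take_addP, sum_take_beta hp0]
  constructor
  · intro hdom
    by_contra! hlm
    have hl2t : l2 < (l2 / p + 1) * p := mul_comm p _ ▸ Nat.lt_mul_div_succ l2 hp0
    have htl2 : (l2 / p + 1) * p ≤ l2 + p := by
      rw [add_one_mul]
      linarith [Nat.div_mul_le_self l2 p]
    have htl1 : (l2 / p + 1) * p ≠ l1 := by
      rintro htl
      rw [if_pos (htl ▸ Dvd.intro_left _ rfl)] at hgl
      omega
    have := hdom (l2 / p + 1)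
    split_ifs at this <;> omega
  · intro hml r
    split_ifs <;> omega

/-- for `p ≥ 3` and strict (at most two-part) partitions
`(λ₁, λ₂)` and `(μ₁, μ₂)` of `n` with `λ₁ - λ₂ ≥ p + δ_{p ∣ λ₁}` and
`μ₁ - μ₂ ≥ p + δ_{p ∣ μ₁}`, one has `β_{λ₁} + β_{λ₂} ⊴ β_{μ₁} + β_{μ₂}`
iff `λ₁ ≥ μ₁`. -/
theorem stmt14 (p n l1 l2 m1 m2 : ℕ) (hp : 3 ≤ p)
    (hln : l1 + l2 = n) (hmn : m1 + m2 = n)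
    (hl : l2 < l1) (hm : m2 < m1)
    (hgl : l2 + p + (if p ∣ l1 then 1 else 0) ≤ l1)
    (hgm : m2 + p + (if p ∣ m1 then 1 else 0) ≤ m1) :
    Dominates (addP (beta p m1) (beta p m2)) (addP (beta p l1) (beta p l2)) ↔
      m1 ≤ l1 :=
  stmt14_general p n l1 l2 m1 m2 hp hln hmn hgl hgm
end
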